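/- Let (M,i) be an image-finite pointed modal transition system over a finite event set Act such that for every Hennessy–Milner logic formula φ, (M,i) ⊨ᶜ φ implies (M,i) ⊨ᵃ φ. Then for every image-finite pointed modal transition system (N,j) with (M,i) ⪯ (N,j), also (N,j) ⪯ (M,i); that is, (M,i) is maximal with respect to refinement up to refinement equivalence. -/

import Mathlib

/-- A mixed transition system over event set `Act` with state set `σ`:
two transition relations `Ra` (asserted/must) and `Rc` (consistent/may). -/
structure MTS (Act σ : Type) where
  Ra : σ → Act → σ → Prop
  Rc : σ → Act → σ → Prop

namespace MTS

/-- `M` is a modal transition system iff `Ra ⊆ Rc`. -/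
def IsModal {Act σ : Type} (M : MTS Act σ) : Prop :=
  ∀ s α t, M.Ra s α t → M.Rc s α t

/-- `M` is image-finite. -/
def ImageFinite {Act σ : Type} (M : MTS Act σ) : Prop :=
  ∀ (s : σ) (α : Act), {t | M.Ra s α t}.Finite ∧ {t | M.Rc s α t}.Finite

end MTS

/-- A labelled transition system viewed as a mixed transition system `(Σ, R, R)`. -/
def LTS {Act σ : Type} (R : σ → Act → σ → Prop) : MTS Act σ := ⟨R, R⟩

/-- `Q` is a refinement from `M` to `N`. -/
def IsRefinement {Act σ τ : Type} (M : MTS Act σ) (N : MTS Act τ) (Q : σ → τ → Prop) : Prop :=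
  ∀ s t, Q s t → ∀ α : Act,
    (∀ s', M.Ra s α s' → ∃ t', N.Ra t α t' ∧ Q s' t') ∧
    (∀ t', N.Rc t α t' → ∃ s', M.Rc s α s' ∧ Q s' t')

/-- `(M,i) ⪯ (N,j)`: the pointed system `(N,j)` refines `(M,i)`. -/
def Refines {Act σ τ : Type} (M : MTS Act σ) (i : σ) (N : MTS Act τ) (j : τ) : Prop :=
  ∃ Q, IsRefinement M N Q ∧ Q i j

/-- Modes for the two judgments of the semantics: `a` (asserted), `c` (consistent). -/
inductive RMode where
  | a | c

/-- The dual mode: `¬a = c` and `¬c = a`. -/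
def RMode.negm : RMode → RMode
  | .a => .c
  | .c => .a

/-- The transition relation of mode `m`. -/
def MTS.R {Act σ : Type} (M : MTS Act σ) : RMode → σ → Act → σ → Prop
  | .a => M.Ra
  | .c => M.Rc

/-- Formulas of Hennessy–Milner logic over `Act`. -/
inductive HML (Act : Type) where
  | tt
  | neg (φ : HML Act)
  | dia (α : Act) (φ : HML Act)
  | and (φ ψ : HML Act)

/-- Larsen's semantics of Hennessy–Milner logic with two judgments `⊨ᵃ`, `⊨ᶜ`. -/
def Sat {Act σ : Type} (M : MTS Act σ) : HML Act → RMode → σ → Prop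
  | .tt, _, _ => True
  | .neg φ, m, s => ¬ Sat M φ m.negm s
  | .dia α φ, m, s => ∃ s', M.R m s α s' ∧ Sat M φ m s'
  | .and φ ψ, m, s => Sat M φ m s ∧ Sat M ψ m s

namespace HML

/-- `[α]φ = ¬⟨α⟩¬φ`. -/
def box {Act : Type} (α : Act) (φ : HML Act) : HML Act := .neg (.dia α (.neg φ))

/-- `φ ∨ ψ = ¬(¬φ ∧ ¬ψ)`. -/
def orf {Act : Type} (φ ψ : HML Act) : HML Act := .neg (.and (.neg φ) (.neg ψ))

/-- Finite conjunction (empty conjunction is `tt`). -/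
def bigAnd {Act : Type} : List (HML Act) → HML Act
  | [] => .tt
  | φ :: l => .and φ (bigAnd l)

/-- Finite disjunction (empty disjunction is `¬tt`). -/
def bigOr {Act : Type} : List (HML Act) → HML Act
  | [] => .neg .tt
  | φ :: l => orf φ (bigOr l)

/-- Modal depth of an HML formula. -/
def depth {Act : Type} : HML Act → ℕ
  | .tt => 0
  | .neg φ => φ.depth
  | .dia _ φ => 1 + φ.depth
  | .and φ ψ => max φ.depth ψ.depth

end HML

/-- Terms of the process algebra MPA. -/
inductive MPA (Act : Type) where
  | zero
  | bot
  | prefMust (α : Act) (p : MPA Act)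
  | prefMay (α : Act) (p : MPA Act)
  | plus (p q : MPA Act)

namespace MPA

variable {Act : Type} [DecidableEq Act]

/-- Must-successors of an MPA term for event `β` (structural operational semantics). -/
def must : MPA Act → Act → List (MPA Act)
  | .zero, _ => []
  | .bot, _ => []
  | .prefMust α p, β => if β = α then [p] else []
  | .prefMay _ _, _ => []
  | .plus p q, β => p.must β ++ q.must β

/-- All (must or may) successors of an MPA term for event `β`. -/
def may : MPA Act → Act → List (MPA Act)
  | .zero, _ => []
  | .bot, _ => [.bot]
  | .prefMust α p, β => if β = α then [p] else []
  | .prefMay α p, β => if β = α then [p] else []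
  | .plus p q, β => p.may β ++ q.may β

/-- The modal transition system `⟦·⟧` given by the structural operational semantics of MPA:
`Ra` is the set of must-transitions, `Rc` the set of all transitions. -/
def mts : MTS Act (MPA Act) :=
  ⟨fun p α q => q ∈ p.must α, fun p α q => q ∈ p.may α⟩

theorem sizeOf_lt_of_mem_must :
    ∀ (t : MPA Act) (α : Act) (r : MPA Act), r ∈ t.must α → sizeOf r < sizeOf t := by
  intro t
  induction t with
  | zero => intro α r h; simp [must] at h
  | bot => intro α r h; simp [must] at h
  | prefMust β p ih =>
      intro α r h
      simp only [must] at h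
      split at h <;> simp_all
  | prefMay β p ih => intro α r h; simp [must] at h
  | plus p q ihp ihq =>
      intro α r h
      simp only [must, List.mem_append] at h
      rcases h with h | h
      · have := ihp α r h; simp; omega
      · have := ihq α r h; simp; omega

theorem sizeOf_le_of_mem_may :
    ∀ (t : MPA Act) (α : Act) (r : MPA Act), r ∈ t.may α → sizeOf r ≤ sizeOf t := by
  intro t
  induction t with
  | zero => intro α r h; simp [may] at h
  | bot => intro α r h; simp [may] at h; simp [h]
  | prefMust β p ih =>
      intro α r h
      simp only [may] at h
      split at h <;> simp_all
  | prefMay β p ih =>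
      intro α r h
      simp only [may] at h
      split at h <;> simp_all
  | plus p q ihp ihq =>
      intro α r h
      simp only [may, List.mem_append] at h
      rcases h with h | h
      · have := ihp α r h; simp; omega
      · have := ihq α r h; simp; omega

theorem sizeOf_lt_plus_of_mem_may (p q : MPA Act) (α : Act) (r : MPA Act)
    (h : r ∈ (MPA.plus p q).may α) : sizeOf r < sizeOf (MPA.plus p q) := by
  simp only [may, List.mem_append] at h
  rcases h with h | h
  · have := sizeOf_le_of_mem_may p α r h; simp; omega
  · have := sizeOf_le_of_mem_may q α r h; simp; omega

end MPA

/-- The characteristic Hennessy–Milner formula `φ_p` of an MPA term `p`. -/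
noncomputable def charForm {Act : Type} [Fintype Act] [DecidableEq Act] : MPA Act → HML Act
  | .zero =>
      .bigAnd (((Finset.univ : Finset Act).toList).map fun α => .neg (.dia α .tt))
  | .bot => .tt
  | .prefMust α p =>
      .and (.dia α (charForm p)) (.and (HML.box α (charForm p))
        (.bigAnd ((((Finset.univ : Finset Act).toList).filter (fun β => β ≠ α)).map
          fun β => .neg (.dia β .tt))))
  | .prefMay α p =>
      .and (HML.box α (charForm p))
        (.bigAnd ((((Finset.univ : Finset Act).toList).filter (fun β => β ≠ α)).map
          fun β => .neg (.dia β .tt)))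
  | .plus p q =>
      .and
        (.bigAnd (((Finset.univ : Finset Act).toList).flatMap fun α =>
          ((MPA.plus p q).must α).attach.map fun r => HML.dia α (charForm r.1)))
        (.bigAnd (((Finset.univ : Finset Act).toList).map fun α =>
          HML.box α (.bigOr (((MPA.plus p q).may α).attach.map fun r => charForm r.1))))
decreasing_by
  all_goals first
    | exact MPA.sizeOf_lt_of_mem_must _ _ _ r.2
    | exact MPA.sizeOf_lt_plus_of_mem_may _ _ _ _ r.2
    | (simp; omega)
    | simp

/-- The formula `ψ_{w,α,p} = [δ₁]…[δₙ](⟨α⟩φ_p ∨ ¬⟨α⟩φ_p)`; the set `Φ` consists of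
all such formulas. -/
noncomputable def psiForm {Act : Type} [Fintype Act] [DecidableEq Act]
    (w : List Act) (α : Act) (p : MPA Act) : HML Act :=
  w.foldr (fun δ φ => HML.box δ φ)
    (HML.orf (.dia α (charForm p)) (.neg (.dia α (charForm p))))

/-- `Rᶜ`-reachability in a mixed transition system. -/
def MTS.ReachC {Act σ : Type} (M : MTS Act σ) : σ → σ → Prop :=
  Relation.ReflTransGen (fun s t => ∃ α, M.Rc s α t)

/-! Refinement is sound for Larsen's semantics: `⊨ᵃ` is preserved and `⊨ᶜ` reflected along it.
Conversely, between image-finite systems, "every formula asserted at `s` is asserted at `t`"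
is itself a refinement, by the usual Hennessy–Milner argument: finitely many successors can
be separated by one conjunction. Now if `(M,i) ⪯ (N,j)` with `N` modal, whatever is asserted at
`j` is consistent at `j`, hence consistent at `i`, hence asserted at `i` by the hypothesis on
`(M,i)`; so `(N,j) ⪯ (M,i)`. -/

@[simp]
theorem RMode.negm_negm (m : RMode) : m.negm.negm = m := by
  cases m <;> rfl

section Logic

variable {Act σ τ : Type}

@[simp]
theorem sat_neg_iff (M : MTS Act σ) (φ : HML Act) (m : RMode) (s : σ) :
    Sat M (.neg φ) m s ↔ ¬ Sat M φ m.negm s :=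
  Iff.rfl

theorem MTS.IsModal.sat_c_of_sat_a {M : MTS Act σ} (hM : M.IsModal) {φ : HML Act} {s : σ}
    (hφ : Sat M φ .a s) : Sat M φ .c s := by
  induction φ generalizing s with
  | tt => trivial
  | neg φ ih => exact fun hc => hφ (ih hc)
  | dia α φ ih =>
    obtain ⟨s', hR, hs'⟩ := hφ
    exact ⟨s', hM _ _ _ hR, ih hs'⟩
  | and φ ψ ihφ ihψ => exact ⟨ihφ hφ.1, ihψ hφ.2⟩

def SatImplies (M : MTS Act σ) (s : σ) (N : MTS Act τ) (t : τ) (m : RMode) : Prop :=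
  ∀ φ : HML Act, Sat M φ m s → Sat N φ m t

theorem satImplies_negm_iff {M : MTS Act σ} {s : σ} {N : MTS Act τ} {t : τ} {m : RMode} :
    SatImplies M s N t m.negm ↔ SatImplies N t M s m := by
  constructor
  · intro h φ hφ
    by_contra hs
    exact h (.neg φ) (by simpa using hs) (by simpa using hφ)
  · intro h φ hφ
    by_contra ht
    exact h (.neg φ) (by simpa using ht) hφ

theorem IsRefinement.sat {M : MTS Act σ} {N : MTS Act τ} {Q : σ → τ → Prop}
    (hQ : IsRefinement M N Q) (φ : HML Act) :
    ∀ s t, Q s t → (Sat M φ .a s → Sat N φ .a t) ∧ (Sat N φ .c t → Sat M φ .c s) := by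
  induction φ with
  | tt => exact fun _ _ _ => ⟨id, id⟩
  | neg φ ih =>
    intro s t hst
    exact ⟨fun hs ht => hs ((ih s t hst).2 ht), fun ht hs => ht ((ih s t hst).1 hs)⟩
  | dia α φ ih =>
    intro s t hst
    constructor
    · rintro ⟨s', hR, hs'⟩
      obtain ⟨t', hR', hQ'⟩ := (hQ s t hst α).1 s' hR
      exact ⟨t', hR', (ih s' t' hQ').1 hs'⟩
    · rintro ⟨t', hR, ht'⟩
      obtain ⟨s', hR', hQ'⟩ := (hQ s t hst α).2 t' hR
      exact ⟨s', hR', (ih s' t' hQ').2 ht'⟩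
  | and φ ψ ihφ ihψ =>
    intro s t hst
    exact ⟨fun hs => ⟨(ihφ s t hst).1 hs.1, (ihψ s t hst).1 hs.2⟩,
      fun ht => ⟨(ihφ s t hst).2 ht.1, (ihψ s t hst).2 ht.2⟩⟩

theorem Refines.satImplies {M : MTS Act σ} {s : σ} {N : MTS Act τ} {t : τ}
    (h : Refines M s N t) : SatImplies M s N t .a := by
  obtain ⟨Q, hQ, hst⟩ := h
  exact fun φ => (hQ.sat φ s t hst).1

theorem exists_sat_forall_not_sat_of_finite {M : MTS Act σ} {s : σ} {N : MTS Act τ}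
    {m : RMode} {T : Set τ} (hT : T.Finite)
    (hsep : ∀ t ∈ T, ∃ φ : HML Act, Sat M φ m s ∧ ¬ Sat N φ m t) :
    ∃ ψ : HML Act, Sat M ψ m s ∧ ∀ t ∈ T, ¬ Sat N ψ m t := by
  induction T, hT using Set.Finite.induction_on with
  | empty => exact ⟨.tt, trivial, by simp⟩
  | @insert t T _ _ ih =>
    obtain ⟨ψ, hψ, hT⟩ := ih fun t' ht' => hsep t' (Set.mem_insert_of_mem t ht')
    obtain ⟨φ, hφ, ht⟩ := hsep t (Set.mem_insert t T)
    refine ⟨.and φ ψ, ⟨hφ, hψ⟩, ?_⟩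
    rintro t' (rfl | ht') ⟨hφ', hψ'⟩
    exacts [ht hφ', hT t' ht' hψ']

theorem SatImplies.exists_succ {M : MTS Act σ} {s : σ} {N : MTS Act τ} {t : τ} {m : RMode}
    (h : SatImplies M s N t m) {α : Act} (hfin : {t' | N.R m t α t'}.Finite)
    {s' : σ} (hs' : M.R m s α s') : ∃ t', N.R m t α t' ∧ SatImplies M s' N t' m := by
  by_contra! hnone
  obtain ⟨ψ, hψ, hnot⟩ := exists_sat_forall_not_sat_of_finite hfin fun t' ht' => by
    simpa [SatImplies] using hnone t' ht'
  obtain ⟨t', ht', hψ'⟩ := h (.dia α ψ) ⟨s', hs', hψ⟩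
  exact hnot t' ht' hψ'

theorem isRefinement_satImplies {M : MTS Act σ} {N : MTS Act τ} (hMf : M.ImageFinite)
    (hNf : N.ImageFinite) : IsRefinement M N fun s t => SatImplies M s N t .a := by
  intro s t hst α
  refine ⟨fun s' hs' => hst.exists_succ (hNf t α).1 hs', fun t' ht' => ?_⟩
  -- the consistency clause is the assertion clause read backwards, through negation
  have hts : SatImplies N t M s .c := satImplies_negm_iff.1 hst
  obtain ⟨s', hs', hts'⟩ := hts.exists_succ (hMf s α).2 ht'
  exact ⟨s', hs', satImplies_negm_iff.2 hts'⟩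

theorem refines_iff_satImplies {M : MTS Act σ} {N : MTS Act τ} (hMf : M.ImageFinite)
    (hNf : N.ImageFinite) {s : σ} {t : τ} : Refines M s N t ↔ SatImplies M s N t .a :=
  ⟨Refines.satImplies, fun h => ⟨_, isRefinement_satImplies hMf hNf, h⟩⟩

end Logic

theorem maximal_of_sat_c_implies_sat_a_general {Act σ : Type}
    (M : MTS Act σ) (hMf : M.ImageFinite) (i : σ)
    (h : ∀ φ : HML Act, Sat M φ .c i → Sat M φ .a i) :
    ∀ (τ : Type) (N : MTS Act τ), N.IsModal → N.ImageFinite →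
      ∀ j : τ, Refines M i N j → Refines N j M i := by
  intro τ N hN hNf j hMN
  have hc : SatImplies N j M i .c :=
    satImplies_negm_iff.1 ((refines_iff_satImplies hMf hNf).1 hMN)
  exact (refines_iff_satImplies hNf hMf).2 fun φ hφ => h φ (hc φ (hN.sat_c_of_sat_a hφ))

/-- If the image-finite pointed modal transition system `(M,i)`
satisfies `(M,i) ⊨ᶜ φ → (M,i) ⊨ᵃ φ` for every HML formula `φ`, then `(M,i)` is
maximal with respect to refinement up to refinement equivalence: any image-finite
pointed modal transition system refining `(M,i)` also refines back. -/
theorem maximal_of_sat_c_implies_sat_a {Act σ : Type} [Fintype Act]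
    (M : MTS Act σ) (hM : M.IsModal) (hMf : M.ImageFinite) (i : σ)
    (h : ∀ φ : HML Act, Sat M φ .c i → Sat M φ .a i) :
    ∀ (τ : Type) (N : MTS Act τ), N.IsModal → N.ImageFinite →
      ∀ j : τ, Refines M i N j → Refines N j M i :=
  maximal_of_sat_c_implies_sat_a_general M hMf i h
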